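/- Let H = H₀ × H₀ and let N be the operator on H with block matrix [[0, 1],[0, 0]]. Define s(b) = b·b*·N·N* + b*·N for b ∈ O_N. Then the set U_N = {b ∈ O_N : s(b) invertible} is an open neighborhood of N in O_N; for every b ∈ U_N one has s(b) ∈ 1 + K(H), the unitary part μ(b) of the polar decomposition s(b) = μ(b)·|s(b)| belongs to U_c(H) and satisfies μ(b)·N·μ(b)* = b; and the map b ↦ μ(b) is continuous on U_N. In particular, π_N : U_c(H) → O_N, π_N(u) = uNu*, has continuous local cross sections around every point of O_N. -/

import Mathlib

noncomputable section
open NormedSpace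

variable {H₀ : Type*} [NormedAddCommGroup H₀] [InnerProductSpace ℂ H₀] [CompleteSpace H₀]

/-- The Hilbert space `H = H₀ × H₀` (with the ℓ²-product inner product). -/
abbrev Hp (H₀ : Type*) [NormedAddCommGroup H₀] : Type _ := WithLp 2 (H₀ × H₀)

/-- The identification `H₀ × H₀ ≃ H`. -/
abbrev ι (H₀ : Type*) [NormedAddCommGroup H₀] : H₀ × H₀ ≃ Hp H₀ :=
  (WithLp.equiv 2 (H₀ × H₀)).symm

/-- The unitary Fredholm group. -/
def Uc (H : Type*) [NormedAddCommGroup H] [InnerProductSpace ℂ H] [CompleteSpace H] :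
    Set (H →L[ℂ] H) :=
  {u | u ∈ unitary (H →L[ℂ] H) ∧ IsCompactOperator ⇑(u - 1)}

/-- The unitary orbit of an operator `N` under the Fredholm group. -/
def orbit {H : Type*} [NormedAddCommGroup H] [InnerProductSpace ℂ H] [CompleteSpace H]
    (N : H →L[ℂ] H) : Set (H →L[ℂ] H) :=
  {b | ∃ u ∈ Uc H, b = u * N * star u}

/-- The map `s(b) = b b* N N* + b* N`. -/
def sMap {H : Type*} [NormedAddCommGroup H] [InnerProductSpace ℂ H] [CompleteSpace H]
    (N b : H →L[ℂ] H) : H →L[ℂ] H :=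
  b * star b * (N * star N) + star b * N

/-!
Write `s = s(b)`. Both `N` and every `b ∈ O_N` satisfy `x² = 0` and `x x* + x* x = 1`, and
from these identities alone `s N = b s` and `N s* = s* b`. Hence `N` commutes with `s* s`,
so with `|s|⁻¹`, and the unitary `μ = s |s|⁻¹` satisfies `μ N = b μ`, i.e. `μ N μ* = b`.
Since `b - N` and `b* - N*` are compact and `s(N) = 1`, the operator `s - 1` is compact, and
so are `|s| - 1 = (s* s - 1)(|s| + 1)⁻¹` and `μ - 1`. Continuity of `μ` follows from that of
the absolute value and of inversion. Around `a = u N u*` run the same construction with `a` in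
place of `N` (then `O_a = O_N` and `s_a(a) = 1`) and take `b ↦ μ_a(b) u`.
-/

lemma TwoSidedIdeal.mul_sub_one_mem {R : Type*} [Ring R] (I : TwoSidedIdeal R) {u v : R}
    (hu : u - 1 ∈ I) (hv : v - 1 ∈ I) : u * v - 1 ∈ I := by
  rw [show u * v - 1 = u * (v - 1) + (u - 1) by noncomm_ring]
  exact I.add_mem (I.mul_mem_left _ _ hv) hu

section UnitaryModIdeal

variable {R : Type*} [Ring R] [StarRing R] (I : TwoSidedIdeal R) {u : R}

lemma star_sub_one_mem_of_mem_unitary (hu : u ∈ unitary R) (h : u - 1 ∈ I) :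
    star u - 1 ∈ I := by
  rw [show star u - 1 = -(star u * (u - 1)) by
    rw [mul_sub, Unitary.star_mul_self_of_mem hu, mul_one, neg_sub]]
  exact I.neg_mem (I.mul_mem_left _ _ h)

lemma conj_sub_mem_of_mem_unitary (hu : u ∈ unitary R) (h : u - 1 ∈ I) (x : R) :
    u * x * star u - x ∈ I := by
  rw [show u * x * star u - x = (u - 1) * (x * star u) + x * (star u - 1) by noncomm_ring]
  exact I.add_mem (I.mul_mem_right _ _ h)
    (I.mul_mem_left _ _ (star_sub_one_mem_of_mem_unitary I hu h))

end UnitaryModIdeal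

lemma mul_star_mul_self_of_mul_self_eq_zero {R : Type*} [Ring R] [StarRing R] {x : R}
    (h2 : x * x = 0) (h : x * star x + star x * x = 1) : x * star x * x = x := by
  calc x * star x * x = (x * star x + star x * x) * x := by
        rw [add_mul, mul_assoc _ x, h2, mul_zero, add_zero]
    _ = x := by rw [h, one_mul]

section CompactIdeal

variable {H : Type*} [NormedAddCommGroup H]

section

variable [NormedSpace ℂ H]

variable (H) in
def compactIdeal : TwoSidedIdeal (H →L[ℂ] H) :=
  .mk' {T | IsCompactOperator T} isCompactOperator_zero IsCompactOperator.add
    IsCompactOperator.neg (fun hT => hT.clm_comp _) (fun hT => hT.comp_clm _)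

@[simp]
lemma mem_compactIdeal {T : H →L[ℂ] H} : T ∈ compactIdeal H ↔ IsCompactOperator T :=
  TwoSidedIdeal.mem_mk' ..

end

variable [InnerProductSpace ℂ H] [CompleteSpace H]

lemma one_mem_Uc : (1 : H →L[ℂ] H) ∈ Uc H :=
  ⟨one_mem _, by simpa using isCompactOperator_zero⟩

lemma mul_mem_Uc {u v : H →L[ℂ] H} (hu : u ∈ Uc H) (hv : v ∈ Uc H) : u * v ∈ Uc H :=
  ⟨mul_mem hu.1 hv.1, mem_compactIdeal.mp <|
    (compactIdeal H).mul_sub_one_mem (mem_compactIdeal.mpr hu.2) (mem_compactIdeal.mpr hv.2)⟩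

lemma star_mem_Uc {u : H →L[ℂ] H} (hu : u ∈ Uc H) : star u ∈ Uc H :=
  ⟨Unitary.star_mem hu.1, mem_compactIdeal.mp <|
    star_sub_one_mem_of_mem_unitary _ hu.1 (mem_compactIdeal.mpr hu.2)⟩

end CompactIdeal

section Orbit

variable {H : Type*} [NormedAddCommGroup H] [InnerProductSpace ℂ H] [CompleteSpace H]
  {N b : H →L[ℂ] H}

lemma self_mem_orbit (N : H →L[ℂ] H) : N ∈ orbit N :=
  ⟨1, one_mem_Uc, by simp⟩

lemma exists_starAlgHom_of_mem_orbit (hb : b ∈ orbit N) :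
    ∃ φ : (H →L[ℂ] H) →⋆ₐ[ℂ] (H →L[ℂ] H), φ N = b := by
  obtain ⟨u, hu, rfl⟩ := hb
  exact ⟨(Unitary.conjStarAlgAut ℂ _ ⟨u, hu.1⟩ : (H →L[ℂ] H) →⋆ₐ[ℂ] (H →L[ℂ] H)), rfl⟩

lemma mul_self_eq_zero_of_mem_orbit (hN2 : N * N = 0) (hb : b ∈ orbit N) : b * b = 0 := by
  obtain ⟨φ, rfl⟩ := exists_starAlgHom_of_mem_orbit hb
  rw [← map_mul, hN2, map_zero]

lemma mul_star_add_star_mul_of_mem_orbit (hN : N * star N + star N * N = 1)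
    (hb : b ∈ orbit N) : b * star b + star b * b = 1 := by
  obtain ⟨φ, rfl⟩ := exists_starAlgHom_of_mem_orbit hb
  rw [← map_star, ← map_mul, ← map_mul, ← map_add, hN, map_one]

lemma sub_mem_compactIdeal_of_mem_orbit (hb : b ∈ orbit N) : b - N ∈ compactIdeal H := by
  obtain ⟨u, hu, rfl⟩ := hb
  exact conj_sub_mem_of_mem_unitary _ hu.1 (mem_compactIdeal.mpr hu.2) N

lemma star_sub_star_mem_compactIdeal_of_mem_orbit (hb : b ∈ orbit N) :
    star b - star N ∈ compactIdeal H := by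
  obtain ⟨u, hu, rfl⟩ := hb
  simpa only [star_mul, star_star, ← mul_assoc] using
    conj_sub_mem_of_mem_unitary _ hu.1 (mem_compactIdeal.mpr hu.2) (star N)

end Orbit

section SMap

variable {H : Type*} [NormedAddCommGroup H] [InnerProductSpace ℂ H] [CompleteSpace H]
  {N b : H →L[ℂ] H}

lemma continuous_sMap (N : H →L[ℂ] H) : Continuous (sMap N) := by
  unfold sMap; fun_prop

lemma sMap_self (hN2 : N * N = 0) (hN : N * star N + star N * N = 1) : sMap N N = 1 := by
  rw [sMap, ← mul_assoc, mul_star_mul_self_of_mul_self_eq_zero hN2 hN, hN]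

lemma sMap_mul_eq_mul_sMap (hN2 : N * N = 0) (hNN : N * star N * N = N) (hb2 : b * b = 0) :
    sMap N b * N = b * sMap N b := by
  calc sMap N b * N = b * star b * (N * star N * N) + star b * (N * N) := by
        simp only [sMap, add_mul, mul_assoc]
    _ = b * star b * N := by rw [hNN, hN2, mul_zero, add_zero]
    _ = b * sMap N b := by
        simp only [sMap, mul_add, ← mul_assoc, hb2, zero_mul, zero_add]

lemma mul_star_sMap_eq_star_sMap_mul (hN2 : N * N = 0) (hb2 : b * b = 0)
    (hbb : b * star b * b = b) :
    N * star (sMap N b) = star (sMap N b) * b := by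
  have hs : star (sMap N b) = N * star N * (b * star b) + star N * b := by
    simp only [sMap, star_add, star_mul, star_star, mul_assoc]
  calc N * star (sMap N b) = N * star N * b := by
        simp only [hs, mul_add, ← mul_assoc, hN2, zero_mul, zero_add]
    _ = star (sMap N b) * b := by
        simp only [hs, add_mul, mul_assoc, hb2, mul_zero, add_zero]
        rw [← mul_assoc b, hbb]

lemma commute_star_sMap_mul_sMap (hN2 : N * N = 0) (hN : N * star N + star N * N = 1)
    (hb : b ∈ orbit N) : Commute N (star (sMap N b) * sMap N b) := by
  have hb2 := mul_self_eq_zero_of_mem_orbit hN2 hb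
  have hbb := mul_star_mul_self_of_mul_self_eq_zero hb2 (mul_star_add_star_mul_of_mem_orbit hN hb)
  calc N * (star (sMap N b) * sMap N b) = star (sMap N b) * (b * sMap N b) := by
        rw [← mul_assoc, mul_star_sMap_eq_star_sMap_mul hN2 hb2 hbb, mul_assoc]
    _ = star (sMap N b) * sMap N b * N := by
        rw [← sMap_mul_eq_mul_sMap hN2 (mul_star_mul_self_of_mul_self_eq_zero hN2 hN) hb2,
          mul_assoc]

section Ideal

variable (I : TwoSidedIdeal (H →L[ℂ] H))

lemma mul_star_sub_mul_star_mem (hb : b - N ∈ I) (hb' : star b - star N ∈ I) :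
    b * star b - N * star N ∈ I := by
  rw [show b * star b - N * star N = (b - N) * star b + N * (star b - star N) by noncomm_ring]
  exact I.add_mem (I.mul_mem_right _ _ hb) (I.mul_mem_left _ _ hb')

lemma sMap_sub_one_mem (hN2 : N * N = 0) (hN : N * star N + star N * N = 1)
    (hb : b - N ∈ I) (hb' : star b - star N ∈ I) : sMap N b - 1 ∈ I := by
  rw [show sMap N b - 1 = (b * star b - N * star N) * (N * star N) + (star b - star N) * N by
    rw [← sMap_self hN2 hN, sMap, sMap]; noncomm_ring]
  exact I.add_mem (I.mul_mem_right _ _ (mul_star_sub_mul_star_mem I hb hb'))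
    (I.mul_mem_right _ _ hb')

lemma star_sMap_sub_one_mem (hN2 : N * N = 0) (hN : N * star N + star N * N = 1)
    (hb : b - N ∈ I) (hb' : star b - star N ∈ I) : star (sMap N b) - 1 ∈ I := by
  rw [show star (sMap N b) - 1 = N * star N * (b * star b - N * star N) + star N * (b - N) by
    rw [← star_one, ← sMap_self hN2 hN, sMap, sMap]
    simp only [star_add, star_mul, star_star]
    noncomm_ring]
  exact I.add_mem (I.mul_mem_left _ _ (mul_star_sub_mul_star_mem I hb hb'))
    (I.mul_mem_left _ _ hb)

end Ideal

end SMap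

section Polar

open CFC Ring

variable {A : Type*} [CStarAlgebra A] [PartialOrder A] [StarOrderedRing A] {s : A}

def polarUnitary (s : A) : A := s * (abs s)⁻¹ʳ

lemma isUnit_abs (hs : IsUnit s) : IsUnit (abs s) :=
  (isUnit_sqrt_iff _).mpr (hs.star.mul hs)

lemma polarUnitary_mul_abs (hs : IsUnit s) : polarUnitary s * abs s = s :=
  inverse_mul_cancel_right _ _ (isUnit_abs hs)

lemma polarUnitary_mem_unitary (hs : IsUnit s) : polarUnitary s ∈ unitary A := by
  have hunit : IsUnit (polarUnitary s) := hs.mul (isUnit_abs hs).ringInverse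
  rw [hunit.mem_unitary_iff_star_mul_self, polarUnitary, star_mul, ← inverse_star,
    (abs_nonneg s).isSelfAdjoint.star_eq, mul_assoc, ← mul_assoc (star s), ← abs_mul_abs,
    mul_inverse_cancel_right _ _ (isUnit_abs hs), inverse_mul_cancel _ (isUnit_abs hs)]

lemma SemiconjBy.polarUnitary {x y : A} (h : SemiconjBy s x y)
    (hx : Commute x (star s * s)) : SemiconjBy (polarUnitary s) x y := by
  refine h.mul_left ?_
  have habs : Commute x (abs s) := by
    rw [CFC.abs, sqrt_eq_cfc]; exact (hx.symm.cfc_nnreal _).symm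
  by_cases hu : IsUnit (abs s)
  · obtain ⟨u, hu⟩ := hu
    rw [← hu, inverse_unit]
    exact (hu ▸ habs).units_inv_right.symm
  · rw [inverse_non_unit _ hu]
    exact Commute.zero_left x

lemma polarUnitary_sub_one_mem (I : TwoSidedIdeal A) (hs : IsUnit s) (h : s - 1 ∈ I)
    (h' : star s - 1 ∈ I) : polarUnitary s - 1 ∈ I := by
  have habs : abs s - 1 ∈ I := by
    have hunit : IsUnit (abs s + 1) :=
      (IsStrictlyPositive.nonneg_add (abs_nonneg s) isStrictlyPositive_one).isUnit
    rw [(eq_mul_inverse_iff_mul_eq (abs s - 1) (star s * s - 1) _ hunit).mpr (by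
      rw [← abs_mul_abs]; noncomm_ring)]
    exact I.mul_mem_right _ _ (I.mul_sub_one_mem h' h)
  have hinv : (abs s)⁻¹ʳ - 1 ∈ I := by
    rw [show (abs s)⁻¹ʳ - 1 = -((abs s)⁻¹ʳ * (abs s - 1)) by
      rw [mul_sub, inverse_mul_cancel _ (isUnit_abs hs), mul_one, neg_sub]]
    exact I.neg_mem (I.mul_mem_left _ _ habs)
  exact I.mul_sub_one_mem h hinv

lemma continuousOn_polarUnitary : ContinuousOn (polarUnitary : A → A) {s | IsUnit s} := by
  intro s hs
  obtain ⟨u, hu⟩ := isUnit_abs hs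
  refine (continuousAt_id.mul ?_).continuousWithinAt
  exact (hu ▸ NormedRing.inverse_continuousAt u).comp CFC.continuous_abs.continuousAt

end Polar

section CrossSection

variable {H : Type*} [NormedAddCommGroup H] [InnerProductSpace ℂ H] [CompleteSpace H]
  {N a b : H →L[ℂ] H}

lemma orbit_subset_orbit (ha : a ∈ orbit N) : orbit N ⊆ orbit a := by
  obtain ⟨u, hu, rfl⟩ := ha
  rintro _ ⟨v, hv, rfl⟩
  refine ⟨v * star u, mul_mem_Uc hv (star_mem_Uc hu), ?_⟩
  have hcancel (x : H →L[ℂ] H) : star u * (u * x) = x := by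
    rw [← mul_assoc, Unitary.star_mul_self_of_mem hu.1, one_mul]
  simp only [star_mul, star_star, mul_assoc, hcancel]

lemma polarUnitary_sMap_mem_Uc (hN2 : N * N = 0) (hN : N * star N + star N * N = 1)
    (hb : b ∈ orbit N) (hs : IsUnit (sMap N b)) : polarUnitary (sMap N b) ∈ Uc H := by
  have hbN := sub_mem_compactIdeal_of_mem_orbit hb
  have hbN' := star_sub_star_mem_compactIdeal_of_mem_orbit hb
  exact ⟨polarUnitary_mem_unitary hs, mem_compactIdeal.mp <| polarUnitary_sub_one_mem _ hs
    (sMap_sub_one_mem _ hN2 hN hbN hbN') (star_sMap_sub_one_mem _ hN2 hN hbN hbN')⟩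

lemma polarUnitary_sMap_conj (hN2 : N * N = 0) (hN : N * star N + star N * N = 1)
    (hb : b ∈ orbit N) (hs : IsUnit (sMap N b)) :
    polarUnitary (sMap N b) * N * star (polarUnitary (sMap N b)) = b := by
  have hsemi : SemiconjBy (sMap N b) N b :=
    sMap_mul_eq_mul_sMap hN2 (mul_star_mul_self_of_mul_self_eq_zero hN2 hN)
      (mul_self_eq_zero_of_mem_orbit hN2 hb)
  rw [(hsemi.polarUnitary (commute_star_sMap_mul_sMap hN2 hN hb)).eq, mul_assoc,
    Unitary.mul_star_self_of_mem (polarUnitary_mem_unitary hs), mul_one]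

lemma exists_local_section (hN2 : N * N = 0) (hN : N * star N + star N * N = 1)
    (ha : a ∈ orbit N) :
    ∃ (V : Set (H →L[ℂ] H)) (σ : (H →L[ℂ] H) → (H →L[ℂ] H)),
      IsOpen V ∧ a ∈ V ∧ ContinuousOn σ (V ∩ orbit N) ∧
      ∀ b ∈ V ∩ orbit N, σ b ∈ Uc H ∧ σ b * N * star (σ b) = b := by
  have ha2 : a * a = 0 := mul_self_eq_zero_of_mem_orbit hN2 ha
  have ha1 : a * star a + star a * a = 1 := mul_star_add_star_mul_of_mem_orbit hN ha
  obtain ⟨u, hu, hua⟩ := ha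
  refine ⟨sMap a ⁻¹' {x | IsUnit x}, fun b => polarUnitary (sMap a b) * u,
    Units.isOpen.preimage (continuous_sMap a), by simp [sMap_self ha2 ha1], ?_, ?_⟩
  · exact (continuousOn_polarUnitary.comp (continuous_sMap a).continuousOn
      fun b hb => hb.1).mul continuousOn_const
  · rintro b ⟨hbV, hb⟩
    have hb' : b ∈ orbit a := orbit_subset_orbit ⟨u, hu, hua⟩ hb
    refine ⟨mul_mem_Uc (polarUnitary_sMap_mem_Uc ha2 ha1 hb' hbV) hu, ?_⟩
    calc polarUnitary (sMap a b) * u * N * star (polarUnitary (sMap a b) * u)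
        = polarUnitary (sMap a b) * a * star (polarUnitary (sMap a b)) := by
          rw [star_mul, hua]; simp only [mul_assoc]
      _ = b := polarUnitary_sMap_conj ha2 ha1 hb' hbV

end CrossSection

section UpperRight

variable {H₀ : Type*} [NormedAddCommGroup H₀] [InnerProductSpace ℂ H₀]
  {N : Hp H₀ →L[ℂ] Hp H₀}

lemma upperRight_apply (hN : ∀ ξ : H₀ × H₀, N (ι H₀ ξ) = ι H₀ (ξ.2, 0)) (x : Hp H₀) :
    N x = ι H₀ (x.ofLp.2, 0) :=
  hN x.ofLp

lemma upperRight_mul_self (hN : ∀ ξ : H₀ × H₀, N (ι H₀ ξ) = ι H₀ (ξ.2, 0)) : N * N = 0 := by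
  ext x
  simp only [mul_apply_eq_comp, upperRight_apply hN]
  rfl

variable [CompleteSpace H₀]

lemma upperRight_star_apply (hN : ∀ ξ : H₀ × H₀, N (ι H₀ ξ) = ι H₀ (ξ.2, 0)) (x : Hp H₀) :
    star N x = ι H₀ (0, x.ofLp.1) := by
  refine ext_inner_left ℂ fun v => ?_
  rw [ContinuousLinearMap.star_eq_adjoint, ContinuousLinearMap.adjoint_inner_right,
    upperRight_apply hN, WithLp.prod_inner_apply, WithLp.prod_inner_apply]
  simp

lemma upperRight_mul_star_add_star_mul (hN : ∀ ξ : H₀ × H₀, N (ι H₀ ξ) = ι H₀ (ξ.2, 0)) :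
    N * star N + star N * N = 1 := by
  ext x
  simp only [add_apply, mul_apply_eq_comp, one_apply_eq_self, upperRight_star_apply hN,
    upperRight_apply hN]
  exact (WithLp.ext_iff _).mpr (Prod.ext (by simp) (by simp))

end UpperRight

/-- Proposition 7.1: `π_N : U_c(H) → O_N` has continuous local cross sections. -/
theorem stmt17 (N : Hp H₀ →L[ℂ] Hp H₀)
    (hN : ∀ ξ : H₀ × H₀, N (ι H₀ ξ) = ι H₀ (ξ.2, 0)) :
    (N ∈ orbit N ∧ IsUnit (sMap N N)) ∧
    (∃ V : Set (Hp H₀ →L[ℂ] Hp H₀), IsOpen V ∧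
      {b ∈ orbit N | IsUnit (sMap N b)} = V ∩ orbit N) ∧
    (∀ b ∈ orbit N, IsUnit (sMap N b) → IsCompactOperator ⇑(sMap N b - 1)) ∧
    (∃ μ : (Hp H₀ →L[ℂ] Hp H₀) → (Hp H₀ →L[ℂ] Hp H₀),
      ContinuousOn μ {b ∈ orbit N | IsUnit (sMap N b)} ∧
      ∀ b ∈ orbit N, IsUnit (sMap N b) →
        μ b ∈ Uc (Hp H₀) ∧ (∃ m : Hp H₀ →L[ℂ] Hp H₀, m.IsPositive ∧ sMap N b = μ b * m) ∧
          μ b * N * star (μ b) = b) ∧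
    (∀ a ∈ orbit N, ∃ (V : Set (Hp H₀ →L[ℂ] Hp H₀)) (σ : (Hp H₀ →L[ℂ] Hp H₀) → (Hp H₀ →L[ℂ] Hp H₀)),
      IsOpen V ∧ a ∈ V ∧ ContinuousOn σ (V ∩ orbit N) ∧
      ∀ b ∈ V ∩ orbit N, σ b ∈ Uc (Hp H₀) ∧ σ b * N * star (σ b) = b) := by
  have hN2 : N * N = 0 := upperRight_mul_self hN
  have hN1 : N * star N + star N * N = 1 := upperRight_mul_star_add_star_mul hN
  refine ⟨⟨self_mem_orbit N, by simp [sMap_self hN2 hN1]⟩,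
    ⟨sMap N ⁻¹' {x | IsUnit x}, Units.isOpen.preimage (continuous_sMap N),
      by ext; exact and_comm⟩,
    fun b hb _ => mem_compactIdeal.mp <| sMap_sub_one_mem _ hN2 hN1
      (sub_mem_compactIdeal_of_mem_orbit hb) (star_sub_star_mem_compactIdeal_of_mem_orbit hb),
    ⟨fun b => polarUnitary (sMap N b),
      continuousOn_polarUnitary.comp (continuous_sMap N).continuousOn fun b hb => hb.2,
      fun b hb hs => ⟨polarUnitary_sMap_mem_Uc hN2 hN1 hb hs, ?_,
        polarUnitary_sMap_conj hN2 hN1 hb hs⟩⟩,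
    fun a ha => exists_local_section hN2 hN1 ha⟩
  exact ⟨CFC.abs (sMap N b),
    (ContinuousLinearMap.nonneg_iff_isPositive _).mp (CFC.abs_nonneg _),
    (polarUnitary_mul_abs hs).symm⟩
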